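/- arXiv:1702.04620 — 3 statements merged into one kernel-verified Lean document; each statement's English description precedes it below -/
import Mathlib

section
/- Let L be a field equipped with an automorphism σ whose fixed field is F. Let M be a finite-dimensional F-vector space, ψ an F-linear endomorphism of M, and consider the F-linear endomorphism id − σ⊗ψ acting on L ⊗_F M (where σ acts on the first factor). Then the F-dimension of the kernel of id − σ⊗ψ on L ⊗_F M is at most dim_F M. -/
open TensorProduct

universe u v

/-- Let `L` be a field with an automorphism `σ` whose fixed field is `F`.
For `M` a finite-dimensional `F`-vector space and `ψ` an `F`-linear endomorphism of `M`,
the `F`-dimension of the kernel of `id - σ ⊗ ψ` acting on `L ⊗[F] M` is at most `dim_F M`. -/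
theorem stmt0 (F : Type v) (L : Type u) [Field F] [Field L] [Algebra F L]
    (σ : L ≃ₐ[F] L) (hσ : ∀ x : L, σ x = x ↔ x ∈ (algebraMap F L).range)
    (M : Type u) [AddCommGroup M] [Module F M] [FiniteDimensional F M]
    (ψ : M →ₗ[F] M) :
    Module.rank F
      (LinearMap.ker ((LinearMap.id : L ⊗[F] M →ₗ[F] L ⊗[F] M) -
        TensorProduct.map σ.toLinearMap ψ)) ≤ Module.rank F M := by
  classical
  set T := TensorProduct.map σ.toLinearMap ψ with hTdef
  set K := LinearMap.ker ((LinearMap.id : L ⊗[F] M →ₗ[F] L ⊗[F] M) - T) with hKdef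
  -- T is σ-semilinear for the L-module structure on L ⊗[F] M
  have hsemi : ∀ (c : L) (u : L ⊗[F] M), T (c • u) = σ c • T u := by
    intro c u
    induction u using TensorProduct.induction_on with
    | zero => simp
    | tmul a x =>
        simp only [hTdef, TensorProduct.smul_tmul', TensorProduct.map_tmul,
          smul_eq_mul, map_mul, AlgEquiv.toLinearMap_apply]
    | add a b ha hb => simp [smul_add, map_add, ha, hb]
  -- elements of K are fixed by T
  have hfix : ∀ u ∈ K, T u = u := by
    intro u hu
    have := LinearMap.mem_ker.mp hu
    simp only [LinearMap.sub_apply, LinearMap.id_apply, sub_eq_zero] at this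
    exact this.symm
  -- key: an F-linearly independent family in K is L-linearly independent
  have key : ∀ {ι : Type u} (v : ι → L ⊗[F] M), (∀ i, v i ∈ K) →
      LinearIndependent F v → LinearIndependent L v := by
    intro ι v hvK hvF
    by_contra hnot
    rw [linearIndependent_iff] at hnot
    push_neg at hnot
    obtain ⟨l₀, hl₀, hl₀ne⟩ := hnot
    -- pick a nonzero relation of minimal support cardinality
    set P : ℕ → Prop := fun n => ∃ l : ι →₀ L,
      Finsupp.linearCombination L v l = 0 ∧ l ≠ 0 ∧ l.support.card = n with hP
    have hPex : ∃ n, P n := ⟨l₀.support.card, l₀, hl₀, hl₀ne, rfl⟩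
    obtain ⟨l, hl, hlne, hlcard⟩ := Nat.find_spec hPex
    -- normalize so that some coefficient is 1
    obtain ⟨j, hj⟩ := Finsupp.ne_iff.mp hlne
    rw [Finsupp.coe_zero, Pi.zero_apply] at hj
    set l' : ι →₀ L := (l j)⁻¹ • l with hl'def
    have hl'j : l' j = 1 := by
      simp [hl'def, Finsupp.smul_apply, smul_eq_mul, inv_mul_cancel₀ hj]
    have hl'comb : Finsupp.linearCombination L v l' = 0 := by
      rw [hl'def, map_smul, hl, smul_zero]
    have hl'supp : l'.support = l.support :=
      Finsupp.support_smul_eq (inv_ne_zero hj)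
    -- the twisted relation
    set l'' : ι →₀ L := l' - l'.mapRange σ (map_zero σ) with hl''def
    have hl''j : l'' j = 0 := by
      simp [hl''def, hl'j]
    have hmapcomb : Finsupp.linearCombination L v (l'.mapRange σ (map_zero σ))
        = T (Finsupp.linearCombination L v l') := by
      rw [Finsupp.linearCombination_apply, Finsupp.linearCombination_apply]
      rw [Finsupp.sum_mapRange_index (by simp)]
      rw [map_finsuppSum]
      exact Finsupp.sum_congr fun i hi => by
        rw [hsemi, hfix _ (hvK i)]
    have hl''comb : Finsupp.linearCombination L v l'' = 0 := by
      rw [hl''def, map_sub, hmapcomb, hl'comb, map_zero, sub_zero]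
    have hl''supp : l''.support ⊆ l'.support.erase j := by
      intro i hi
      rw [Finsupp.mem_support_iff] at hi
      rw [Finset.mem_erase]
      constructor
      · rintro rfl; exact hi hl''j
      · rw [Finsupp.mem_support_iff]
        intro h0
        apply hi
        simp [hl''def, h0]
    -- by minimality, l'' = 0
    have hl''zero : l'' = 0 := by
      by_contra h
      have hcard : l''.support.card < Nat.find hPex := by
        calc l''.support.card ≤ (l'.support.erase j).card :=
              Finset.card_le_card hl''supp
          _ < l'.support.card := Finset.card_erase_lt_of_mem
              (by rw [hl'supp, Finsupp.mem_support_iff]; exact hj)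
          _ = Nat.find hPex := by rw [hl'supp, hlcard]
      exact Nat.find_min hPex hcard ⟨l'', hl''comb, h, rfl⟩
    -- hence all coefficients are fixed by σ, so they come from F
    have hfixed : ∀ i, σ (l' i) = l' i := by
      intro i
      have : l'' i = 0 := by rw [hl''zero]; rfl
      have h2 : l' i - σ (l' i) = 0 := by simpa [hl''def] using this
      exact (sub_eq_zero.mp h2).symm
    have hc : ∀ i, ∃ c : F, algebraMap F L c = l' i := fun i =>
      (hσ (l' i)).mp (hfixed i)
    choose c hcspec using hc
    -- obtain a contradiction with F-linear independence
    have hsum : ∑ i ∈ l'.support, c i • v i = 0 := by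
      have := hl'comb
      rw [Finsupp.linearCombination_apply, Finsupp.sum] at this
      rw [← this]
      exact Finset.sum_congr rfl fun i _ => by
        rw [← hcspec i, algebraMap_smul]
    have hj' : j ∈ l'.support := by
      rw [Finsupp.mem_support_iff, hl'j]; exact one_ne_zero
    have := linearIndependent_iff'.mp hvF l'.support c hsum j hj'
    apply hj
    have : algebraMap F L (c j) = 0 := by rw [this, map_zero]
    rw [hcspec j, hl'j] at this
    exact absurd this one_ne_zero
  -- now bound the rank
  let b := Module.Basis.ofVectorSpace F K
  have hFind : LinearIndependent F (fun i => ((b i : K) : L ⊗[F] M)) :=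
    b.linearIndependent.map' K.subtype K.ker_subtype
  have hLind := key _ (fun i => (b i).2) hFind
  have hle := hLind.cardinal_le_rank
  rw [Module.rank_baseChange, Cardinal.lift_id] at hle
  calc Module.rank F K = Cardinal.mk (Module.Basis.ofVectorSpaceIndex F K) := b.mk_eq_rank''.symm
    _ ≤ Module.rank F M := hle
end

section
/- Let Λ be a Noetherian ring and a, b : C → C' morphisms in the derived category of perfect complexes of Λ-modules. Suppose f is an element of the center of Λ such that Λ[1/f] ⊗^L_Λ Cone(b) = 0. Then there exist n ≥ 0 and a morphism c : C' → C' such that f^n · a = c ∘ b in the derived category. -/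
/-!
Since `C` and `C'` are bounded complexes of finitely generated projectives, so is `K = Cone(b)`.
Over a Noetherian ring its homology modules are finitely generated, so a single power `r = f ^ n`
kills all of them, i.e. `r • 𝟙 K` sends cycles to boundaries. Composing such "ghost" maps on a
bounded complex of projectives pushes a map down one degree at a time up to homotopy, so
`r ^ (2N + 1) • 𝟙 K` is null-homotopic once `K` lives in degrees `[-N, N]`. Finally, the
triangle `C → C' → K → C[1]` is distinguished in the homotopy category, so a morphism out of `C`
factors through `b` as soon as its composite with `K[-1] → C` vanishes. For `r' • a` with
`r' • 𝟙 K` null-homotopic, that composite factors through `(r' • 𝟙 K)[-1] = 0`.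
-/

open CategoryTheory Limits

section Torsion

variable {R : Type*} [CommRing R] {M : Type*} [AddCommGroup M] [Module R M]

lemma pow_smul_eq_zero_of_le {f : R} {m n : ℕ} {x : M} (hx : f ^ m • x = 0) (hmn : m ≤ n) :
    f ^ n • x = 0 := by
  rw [← Nat.sub_add_cancel hmn, pow_add, mul_smul, hx, smul_zero]

lemma Module.Finite.exists_pow_smul_eq_zero [Module.Finite R M] {f : R}
    (h : ∀ x : M, ∃ n : ℕ, f ^ n • x = 0) : ∃ n : ℕ, ∀ x : M, f ^ n • x = 0 := by
  choose n hn using h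
  obtain ⟨s, hs⟩ := Module.Finite.fg_top (R := R) (M := M)
  refine ⟨s.sup n, fun x => ?_⟩
  have hx : x ∈ Submodule.span R (s : Set M) := hs ▸ Submodule.mem_top
  induction hx using Submodule.span_induction with
  | mem y hy => exact pow_smul_eq_zero_of_le (hn y) (Finset.le_sup hy)
  | zero => exact smul_zero _
  | add y z _ _ hy hz => rw [smul_add, hy, hz, add_zero]
  | smul r y _ hy => rw [smul_comm, hy, smul_zero]

end Torsion

namespace CategoryTheory.ShortComplex

variable {R : Type*} [CommRing R] (S : ShortComplex (ModuleCat R))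

instance moduleCat_finite_homology [IsNoetherianRing R] [Module.Finite R S.X₂] :
    Module.Finite R S.homology :=
  have : IsNoetherian R S.X₂ := isNoetherian_of_isNoetherianRing_of_finite R S.X₂
  have : Module.Finite R S.moduleCatLeftHomologyData.H :=
    Module.Finite.of_surjective _ (Submodule.mkQ_surjective (LinearMap.range S.moduleCatToCycles))
  Module.Finite.equiv S.moduleCatHomologyIso.toLinearEquiv.symm

lemma moduleCat_exists_f_apply_eq_smul {r : R} (hr : ∀ z : S.homology, r • z = 0) {x : S.X₂}
    (hx : S.g x = 0) : ∃ y : S.X₁, S.f y = r • x := by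
  have hH : ∀ w : S.moduleCatLeftHomologyData.H, r • w = 0 := fun w => by
    let e := S.moduleCatHomologyIso.toLinearEquiv
    rw [← e.apply_symm_apply w, ← map_smul, hr, map_zero]
  let ξ : LinearMap.ker S.g.hom := ⟨x, hx⟩
  have hclass := hH ((LinearMap.range S.moduleCatToCycles).mkQ ξ)
  change r • (Submodule.Quotient.mk ξ : _ ⧸ LinearMap.range S.moduleCatToCycles) = 0 at hclass
  rw [← Submodule.Quotient.mk_smul, Submodule.Quotient.mk_eq_zero] at hclass
  obtain ⟨y, hy⟩ := hclass
  exact ⟨y, congrArg Subtype.val hy⟩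

end CategoryTheory.ShortComplex

variable {C : Type*} [Category C] [Preadditive C] [HasZeroObject C] [HasShift C ℤ]
  [∀ n : ℤ, (CategoryTheory.shiftFunctor C n).Additive] [Pretriangulated C]
  {R : Type*} [Ring R] [Linear R C] [∀ n : ℤ, (CategoryTheory.shiftFunctor C n).Linear R] in
theorem CategoryTheory.Pretriangulated.Triangle.exists_smul_eq_mor₁_comp (T : Triangle C)
    (hT : T ∈ distTriang C) {r : R} (hr : r • 𝟙 T.obj₃ = 0) {X : C} (a : T.obj₁ ⟶ X) :
    ∃ c : T.obj₂ ⟶ X, r • a = T.mor₁ ≫ c := by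
  have hr' : r • 𝟙 T.invRotate.obj₁ = 0 := by
    rw [Triangle.invRotate_obj₁, ← Functor.map_id, ← Functor.map_smul, hr, Functor.map_zero]
  let a' : T.invRotate.obj₂ ⟶ X := a
  have : T.invRotate.mor₁ ≫ (r • a') = 0 := by
    rw [Linear.comp_smul, ← Category.id_comp T.invRotate.mor₁, ← Linear.smul_comp,
      ← Linear.smul_comp, hr', zero_comp, zero_comp]
  exact Triangle.yoneda_exact₂ _ (inv_rot_of_distTriang _ hT) (r • a') this

namespace CochainComplex

section MappingConeFactorization

variable {C : Type*} [Category C] [Preadditive C] [HasZeroObject C] [HasBinaryBiproducts C]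
  {R : Type*} [Ring R] [Linear R C]

theorem exists_homotopy_smul_comp_of_homotopy_smul_id_mappingCone {X Y : CochainComplex C ℤ}
    (a b : X ⟶ Y) (r : R) (h : Homotopy (r • 𝟙 (mappingCone b)) 0) :
    ∃ c : Y ⟶ Y, Nonempty (Homotopy (r • a) (b ≫ c)) := by
  have hr : r • 𝟙 ((HomotopyCategory.quotient C _).obj (mappingCone b)) = 0 := by
    rw [← (HomotopyCategory.quotient C _).map_id, ← Functor.map_smul,
      HomotopyCategory.eq_of_homotopy _ _ h, Functor.map_zero]
  obtain ⟨c, hc⟩ := Pretriangulated.Triangle.exists_smul_eq_mor₁_comp _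
    (HomotopyCategory.mappingCone_triangleh_distinguished b) hr
    ((HomotopyCategory.quotient C _).map a)
  obtain ⟨c, rfl⟩ := (HomotopyCategory.quotient C _).map_surjective (X := Y) (Y := Y) c
  refine ⟨c, ⟨HomotopyCategory.homotopyOfEq _ _ ?_⟩⟩
  rw [Functor.map_smul, Functor.map_comp]
  exact hc

end MappingConeFactorization

variable {R : Type*} [CommRing R]

-- `h` and `j` are the neighbours `i - 1` and `i + 1` of `i`, named so that no casts are needed.
def SendsCyclesToBoundaries {L L' : CochainComplex (ModuleCat R) ℤ} (φ : L ⟶ L') (i : ℤ) :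
    Prop :=
  ∀ h j : ℤ, h + 1 = i → i + 1 = j → ∀ x : L.X i, L.d i j x = 0 →
    ∃ y : L'.X h, L'.d h i y = φ.f i x

section Ghost

variable {K L L' P : CochainComplex (ModuleCat R) ℤ}

lemma sendsCyclesToBoundaries_smul_id {r : R} {i : ℤ} (hr : ∀ z : K.homology i, r • z = 0) :
    SendsCyclesToBoundaries (r • 𝟙 K) i := by
  rintro h j hhi hij x hx
  have hnext : (ComplexShape.up ℤ).next i = j := (ComplexShape.up ℤ).next_eq' hij
  have hprev : (ComplexShape.up ℤ).prev i = h := (ComplexShape.up ℤ).prev_eq' hhi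
  have hboundary : ∃ y : K.X ((ComplexShape.up ℤ).prev i), K.d _ i y = r • x :=
    (K.sc i).moduleCat_exists_f_apply_eq_smul hr (x := x) (by
      change K.d i ((ComplexShape.up ℤ).next i) x = 0
      rwa [hnext])
  rwa [hprev] at hboundary

lemma SendsCyclesToBoundaries.of_isZero (φ : L ⟶ L') {i : ℤ} (hi : IsZero (L.X i)) :
    SendsCyclesToBoundaries φ i := by
  rintro h j - - x -
  refine ⟨0, ?_⟩
  rw [map_zero, (ModuleCat.isZero_iff_subsingleton.1 hi).elim x 0, map_zero]

lemma exists_pow_smul_id_sendsCyclesToBoundaries [IsNoetherianRing R]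
    (hK : ∀ i, Module.Finite R (K.X i)) {N : ℕ} (hN : ∀ q : ℤ, N < |q| → IsZero (K.X q)) {f : R}
    (h : ∀ (i : ℤ) (x : K.homology i), ∃ n : ℕ, f ^ n • x = 0) :
    ∃ n : ℕ, ∀ i, SendsCyclesToBoundaries ((f ^ n : R) • 𝟙 K) i := by
  have hdeg : ∀ i, ∃ n : ℕ, ∀ x : K.homology i, f ^ n • x = 0 := fun i =>
    have : Module.Finite R (K.sc i).X₂ := hK i
    have : Module.Finite R (K.homology i) := inferInstanceAs (Module.Finite R (K.sc i).homology)
    Module.Finite.exists_pow_smul_eq_zero (h i)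
  choose n hn using hdeg
  refine ⟨(Finset.Icc (-N : ℤ) N).sup n, fun i => ?_⟩
  by_cases hi : |i| ≤ N
  · refine sendsCyclesToBoundaries_smul_id fun x =>
      pow_smul_eq_zero_of_le (hn i x) (Finset.le_sup ?_)
    rw [Finset.mem_Icc, ← abs_le]
    exact hi
  · exact .of_isZero _ (hN i (not_le.1 hi))

lemma exists_lift_of_sendsCyclesToBoundaries {i j : ℤ} (hji : j + 1 = i)
    [Module.Projective R (P.X i)] (g : P ⟶ L) (hg : g.f (i + 1) = 0) (φ : L ⟶ L')
    (hφ : SendsCyclesToBoundaries φ i) :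
    ∃ t : P.X i ⟶ L'.X j, t ≫ L'.d j i = g.f i ≫ φ.f i := by
  have hbd : ∀ x, (g.f i ≫ φ.f i) x ∈ LinearMap.range (L'.d j i).hom := fun x => by
    refine hφ j (i + 1) hji rfl (g.f i x) ?_
    rw [← ModuleCat.comp_apply, g.comm, hg, Limits.comp_zero]
    rfl
  obtain ⟨t, ht⟩ := Module.projective_lifting_property (L'.d j i).hom.rangeRestrict
    ((g.f i ≫ φ.f i).hom.codRestrict _ hbd) (LinearMap.surjective_rangeRestrict _)
  exact ⟨ModuleCat.ofHom t, by ext x; exact congrArg Subtype.val (LinearMap.congr_fun ht x)⟩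

-- The homotopy is concentrated in degree `m`, where `g ≫ φ` has boundary values and therefore
-- lifts through the differential by projectivity of `P.X m`.
lemma exists_homotopy_comp_eq_zero_of_lt {m : ℤ} [Module.Projective R (P.X m)] (g : P ⟶ L)
    (hg : ∀ j, m < j → g.f j = 0) (φ : L ⟶ L') (hφ : SendsCyclesToBoundaries φ m) :
    ∃ g' : P ⟶ L', (∀ j, m - 1 < j → g'.f j = 0) ∧ Nonempty (Homotopy (g ≫ φ) g') := by
  have hlift : ∀ i j, j + 1 = i → i = m →
      ∃ t : P.X i ⟶ L'.X j, t ≫ L'.d j i = g.f i ≫ φ.f i := by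
    rintro i j hji rfl
    exact exists_lift_of_sendsCyclesToBoundaries hji g (hg _ (lt_add_one i)) φ hφ
  let t : ∀ i j, (ComplexShape.up ℤ).Rel j i → (P.X i ⟶ L'.X j) := fun i j hji =>
    if hi : i = m then (hlift i j hji hi).choose else 0
  refine ⟨g ≫ φ - Homotopy.nullHomotopicMap' t, fun j hj => ?_,
    ⟨Homotopy.equivSubZero.symm (by rw [sub_sub_cancel]; exact Homotopy.nullHomotopy' t)⟩⟩
  have hnext : t (j + 1) j rfl = 0 := dif_neg (by omega)
  rw [HomologicalComplex.sub_f_apply, Homotopy.nullHomotopicMap'_f (sub_add_cancel j 1)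
    (rfl : j + 1 = j + 1), hnext, Limits.comp_zero, zero_add, HomologicalComplex.comp_f]
  obtain rfl | hjm := eq_or_lt_of_le (show m ≤ j by omega)
  · rw [show t m (m - 1) (sub_add_cancel m 1) = _ from dif_pos rfl,
      (hlift m (m - 1) (sub_add_cancel m 1) rfl).choose_spec, sub_self]
  · rw [show t j (j - 1) (sub_add_cancel j 1) = 0 from dif_neg (by omega), hg j hjm]
    simp

lemma exists_homotopy_pow_smul_eq_zero_of_lt (hP : ∀ i, Module.Projective R (P.X i)) {r : R}
    (hr : ∀ i, SendsCyclesToBoundaries (r • 𝟙 L) i) (k : ℕ) (m : ℤ) (g : P ⟶ L)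
    (hg : ∀ j, m < j → g.f j = 0) :
    ∃ g' : P ⟶ L, (∀ j, m - k < j → g'.f j = 0) ∧ Nonempty (Homotopy (r ^ k • g) g') := by
  induction k generalizing m g with
  | zero => exact ⟨g, by simpa using hg, ⟨Homotopy.ofEq (by rw [pow_zero, one_smul])⟩⟩
  | succ k ih =>
    obtain ⟨g₁, hg₁, ⟨H₁⟩⟩ := exists_homotopy_comp_eq_zero_of_lt g hg _ (hr m)
    obtain ⟨g', hg', ⟨H'⟩⟩ := ih (m - 1) g₁ hg₁
    refine ⟨g', fun j hj => hg' j (by push_cast at hj; linarith), ⟨?_⟩⟩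
    have hpow : r ^ (k + 1) • g = r ^ k • (g ≫ (r • 𝟙 L)) := by
      rw [Linear.comp_smul, Category.comp_id, smul_smul, pow_succ]
    exact (Homotopy.ofEq hpow).trans ((H₁.smul (r ^ k)).trans H')

theorem homotopy_pow_smul_id_zero (hP : ∀ i, Module.Projective R (P.X i)) {N : ℕ}
    (hN : ∀ q : ℤ, N < |q| → IsZero (P.X q)) {r : R}
    (hr : ∀ i, SendsCyclesToBoundaries (r • 𝟙 P) i) :
    Nonempty (Homotopy (r ^ (2 * N + 1) • 𝟙 P) 0) := by
  obtain ⟨g', hg', ⟨H⟩⟩ := exists_homotopy_pow_smul_eq_zero_of_lt hP hr (2 * N + 1) N (𝟙 P)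
    (fun j hj => (hN j (lt_of_lt_of_le hj (le_abs_self j))).eq_of_src _ _)
  have hzero : g' = 0 := by
    ext1 j
    by_cases hj : (N : ℤ) - ↑(2 * N + 1) < j
    · exact hg' j hj
    · exact (hN j (by push_cast at hj; rw [lt_abs]; omega)).eq_of_src _ _
  exact ⟨H.trans (Homotopy.ofEq hzero)⟩

end Ghost

section MappingConeX

variable {C C' : CochainComplex (ModuleCat R) ℤ} (b : C ⟶ C')

noncomputable def mappingConeXLinearEquiv (p : ℤ) :
    (mappingCone b).X p ≃ₗ[R] C.X (p + 1) × C'.X p :=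
  (HomologicalComplex.homotopyCofiber.XIsoBiprod b p (p + 1) rfl ≪≫
    ModuleCat.biprodIsoProd _ _).toLinearEquiv

instance (p : ℤ) [Module.Finite R (C.X (p + 1))] [Module.Finite R (C'.X p)] :
    Module.Finite R ((mappingCone b).X p) :=
  Module.Finite.equiv (mappingConeXLinearEquiv b p).symm

instance (p : ℤ) [Module.Projective R (C.X (p + 1))] [Module.Projective R (C'.X p)] :
    Module.Projective R ((mappingCone b).X p) :=
  Module.Projective.of_equiv (mappingConeXLinearEquiv b p).symm

lemma isZero_mappingCone_X {p : ℤ} (h₁ : IsZero (C.X (p + 1))) (h₂ : IsZero (C'.X p)) :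
    IsZero ((mappingCone b).X p) :=
  ((biprod_isZero_iff _ _).2 ⟨h₁, h₂⟩).of_iso
    (HomologicalComplex.homotopyCofiber.XIsoBiprod b p (p + 1) rfl)

lemma isZero_mappingCone_X_of_bounded {N₁ N₂ : ℕ} (hC : ∀ q : ℤ, N₁ < |q| → IsZero (C.X q))
    (hC' : ∀ q : ℤ, N₂ < |q| → IsZero (C'.X q)) (q : ℤ) (hq : ((N₁ + N₂ + 1 : ℕ) : ℤ) < |q|) :
    IsZero ((mappingCone b).X q) := by
  have hshift := abs_sub_abs_le_abs_sub q (q + 1)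
  rw [sub_add_cancel_left, abs_neg, abs_one] at hshift
  push_cast at hq
  exact isZero_mappingCone_X b (hC _ (by omega)) (hC' _ (by omega))

end MappingConeX

end CochainComplex

/-- Let `R` be a Noetherian (commutative, so that `f` is automatically
central) ring and `a, b : C ⟶ C'` morphisms of perfect complexes of `R`-modules.  If `f ∈ R`
is such that `R[1/f] ⊗^L Cone(b) = 0` (every homology class of the mapping cone of `b` is
killed by a power of `f`), then there exist `n ≥ 0` and `c : C' ⟶ C'` with
`f^n · a = c ∘ b` in the derived category (i.e. up to homotopy). -/
theorem stmt1 (R : Type) [CommRing R] [IsNoetherianRing R]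
    (C C' : CochainComplex (ModuleCat R) ℤ)
    (hCbdd : ∃ N : ℕ, ∀ q : ℤ, N < |q| → Limits.IsZero (C.X q))
    (hC'bdd : ∃ N : ℕ, ∀ q : ℤ, N < |q| → Limits.IsZero (C'.X q))
    (hCfin : ∀ q : ℤ, Module.Finite R (C.X q)) (hC'fin : ∀ q : ℤ, Module.Finite R (C'.X q))
    (hCproj : ∀ q : ℤ, Module.Projective R (C.X q))
    (hC'proj : ∀ q : ℤ, Module.Projective R (C'.X q))
    (a b : C ⟶ C') (f : R)
    (hloc : ∀ (i : ℤ) (x : (CochainComplex.mappingCone b).homology i), ∃ n : ℕ, f ^ n • x = 0) :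
    ∃ (n : ℕ) (c : C' ⟶ C'), Nonempty (Homotopy ((f ^ n : R) • a) (b ≫ c)) := by
  obtain ⟨N₁, hN₁⟩ := hCbdd
  obtain ⟨N₂, hN₂⟩ := hC'bdd
  have hKbdd := CochainComplex.isZero_mappingCone_X_of_bounded b hN₁ hN₂
  obtain ⟨n, hghost⟩ := CochainComplex.exists_pow_smul_id_sendsCyclesToBoundaries
    (fun _ => inferInstance) hKbdd hloc
  obtain ⟨H⟩ := CochainComplex.homotopy_pow_smul_id_zero (fun _ => inferInstance) hKbdd hghost
  obtain ⟨c, hc⟩ :=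
    CochainComplex.exists_homotopy_smul_comp_of_homotopy_smul_id_mappingCone a b _ H
  exact ⟨n * (2 * (N₁ + N₂ + 1) + 1), c, by rwa [pow_mul]⟩
end

section
/- Let R be a Noetherian ring, b : C → C' a morphism of perfect complexes of R-modules, and f a central element of R such that Λ[1/f] ⊗^L Cone(b) = 0. Then for n sufficiently large, the endomorphism of Cone(b) given by multiplication by f^n is zero in the derived category. -/
/-!
Every homology module of the cone is finitely generated over a Noetherian ring and consists of
`f`-power torsion, so a single power of `f` kills it. A null-homotopy of a power of `f` is then
built downwards, one degree at a time: if `h` is a null-homotopy of `c` in degrees `≥ a`, then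
`c - d h` maps the projective term in degree `a - 1` into the cycles; if `e` kills the homology
there, `e (c - d h)` lifts through the differential, and the lift extends `e h` to a
null-homotopy of `e c` in degrees `≥ a - 1`. Boundedness stops the induction after finitely many
steps.
-/

open CategoryTheory Limits

theorem Module.exists_pow_smul_eq_zero_of_finite {R M : Type*} [CommSemiring R]
    [AddCommMonoid M] [Module R M] [Module.Finite R M] {f : R}
    (h : ∀ x : M, ∃ n : ℕ, f ^ n • x = 0) : ∃ m : ℕ, ∀ x : M, f ^ m • x = 0 := by
  classical
  obtain ⟨s, hs⟩ := Module.Finite.fg_top (R := R) (M := M)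
  choose n hn using h
  refine ⟨s.sup n, fun x => ?_⟩
  have hmem : f ^ s.sup n ∈ (Submodule.span R (s : Set M)).annihilator := by
    rw [Submodule.mem_annihilator_span]
    rintro ⟨y, hy⟩
    rw [← Nat.sub_add_cancel (Finset.le_sup hy), pow_add, mul_smul, hn, smul_zero]
  rw [hs] at hmem
  exact Submodule.mem_annihilator.mp hmem x Submodule.mem_top

namespace HomologicalComplex

variable {R : Type*} [CommRing R] {ι : Type*} {c : ComplexShape ι}

theorem finite_homology [IsNoetherianRing R] (K : HomologicalComplex (ModuleCat R) c) (j : ι)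
    [Module.Finite R (K.X j)] : Module.Finite R (K.homology j) := by
  have : IsNoetherian R (K.cycles j) :=
    isNoetherian_of_injective (K.iCycles j).hom ((ModuleCat.mono_iff_injective _).mp inferInstance)
  exact Module.Finite.of_surjective (K.homologyπ j).hom
    ((ModuleCat.epi_iff_surjective _).mp inferInstance)

theorem exists_pow_smul_id_homology_eq_zero [IsNoetherianRing R]
    (K : HomologicalComplex (ModuleCat R) c) (j : ι) [Module.Finite R (K.X j)] {f : R}
    (h : ∀ x : K.homology j, ∃ n : ℕ, f ^ n • x = 0) :
    ∃ m : ℕ, f ^ m • 𝟙 (K.homology j) = 0 := by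
  have := K.finite_homology j
  obtain ⟨m, hm⟩ := Module.exists_pow_smul_eq_zero_of_finite h
  exact ⟨m, by ext x; simpa using hm x⟩

theorem exists_comp_d_eq_smul_of_smul_id_homology_eq_zero {V : Type*} [Category V] [Abelian V]
    [Linear R V] (K : HomologicalComplex V c) {i j k : ι} (hi : c.prev j = i)
    (hk : c.next j = k) {e : R} (he : e • 𝟙 (K.homology j) = 0) {P : V} [Projective P]
    (v : P ⟶ K.X j) (hv : v ≫ K.d j k = 0) : ∃ ψ : P ⟶ K.X i, ψ ≫ K.d i j = e • v := by
  have hexact : (ShortComplex.mk _ _ (K.toCycles_comp_homologyπ i j)).Exact :=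
    ShortComplex.exact_of_g_is_cokernel _ (K.homologyIsCokernel i j hi)
  let z := e • K.liftCycles v k hk hv
  have hz : z ≫ K.homologyπ j = 0 := by
    calc z ≫ K.homologyπ j = K.liftCycles v k hk hv ≫ K.homologyπ j ≫ (e • 𝟙 _) := by simp [z]
      _ = 0 := by rw [he, comp_zero, comp_zero]
  refine ⟨hexact.liftFromProjective z hz, ?_⟩
  rw [← K.toCycles_i, hexact.liftFromProjective_comp_assoc]
  simp [z]

end HomologicalComplex

namespace CochainComplex

variable {R : Type*} [CommRing R]

section Preadditive

variable {V : Type*} [Category V] [Preadditive V] [Linear R V]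

/-- The homotopy is indexed by all pairs of degrees, only `h (q + 1) q` being relevant, so that
no transport along `q - 1 + 1 = q` is ever needed. -/
def IsNullHomotopyFrom (K : CochainComplex V ℤ) (c : R) (h : ∀ p q : ℤ, K.X p ⟶ K.X q)
    (a : ℤ) : Prop :=
  ∀ p q r : ℤ, p + 1 = q → q + 1 = r → a ≤ q →
    c • 𝟙 (K.X q) = K.d q r ≫ h r q + h q p ≫ K.d p q

theorem isNullHomotopyFrom_of_isZero {K : CochainComplex V ℤ} {a : ℤ}
    (hK : ∀ q, a ≤ q → IsZero (K.X q)) (c : R) : IsNullHomotopyFrom K c (fun _ _ => 0) a :=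
  fun _ q _ _ _ hq => (hK q hq).eq_of_src _ _

def IsNullHomotopyFrom.homotopy {K : CochainComplex V ℤ} {c : R} {h : ∀ p q : ℤ, K.X p ⟶ K.X q}
    {a : ℤ} (hh : IsNullHomotopyFrom K c h a) (hK : ∀ q < a, IsZero (K.X q)) :
    Homotopy (c • 𝟙 K) 0 where
  hom i j := if j + 1 = i then h i j else 0
  zero i j hij := if_neg hij
  comm i := by
    rw [dNext_eq _ (show (ComplexShape.up ℤ).Rel i (i + 1) from rfl),
      prevD_eq _ (show (ComplexShape.up ℤ).Rel (i - 1) i by simp)]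
    simp only [sub_add_cancel, HomologicalComplex.zero_f, add_zero,
      HomologicalComplex.smul_f_apply, HomologicalComplex.id_f]
    by_cases hi : a ≤ i
    · exact hh (i - 1) i (i + 1) (by omega) rfl hi
    · exact (hK i (by omega)).eq_of_src _ _

end Preadditive

theorem IsNullHomotopyFrom.extend {V : Type*} [Category V] [Abelian V] [Linear R V]
    {K : CochainComplex V ℤ} {c e : R} {h : ∀ p q : ℤ, K.X p ⟶ K.X q} {a : ℤ}
    (hh : IsNullHomotopyFrom K c h a) [Projective (K.X (a - 1))]
    (he : e • 𝟙 (K.homology (a - 1)) = 0) :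
    ∃ h' : ∀ p q : ℤ, K.X p ⟶ K.X q, IsNullHomotopyFrom K (e * c) h' (a - 1) := by
  have hrel : h a (a - 1) ≫ K.d (a - 1) a = c • 𝟙 _ - K.d a (a + 1) ≫ h (a + 1) a := by
    rw [hh (a - 1) a (a + 1) (by omega) rfl le_rfl]
    abel
  set v := c • 𝟙 (K.X (a - 1)) - K.d (a - 1) a ≫ h a (a - 1)
  have hv : v ≫ K.d (a - 1) a = 0 := by simp [v, hrel]
  obtain ⟨ψ, hψ⟩ := K.exists_comp_d_eq_smul_of_smul_id_homology_eq_zero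
    (prev ℤ (a - 1)) (by simp) he v hv
  refine ⟨Function.update (e • h) (a - 1) (Function.update (e • h (a - 1)) (a - 1 - 1) ψ), ?_⟩
  intro p q r hpq hqr hq
  by_cases hqa : a ≤ q
  · rw [Function.update_of_ne (by omega), Function.update_of_ne (by omega), Pi.smul_apply,
      Pi.smul_apply, Pi.smul_apply, Pi.smul_apply, mul_smul, hh p q r hpq hqr (by omega),
      smul_add, Linear.comp_smul, Linear.smul_comp]
  · obtain rfl : q = a - 1 := by omega
    obtain rfl : a = r := by omega
    obtain rfl : p = a - 1 - 1 := by omega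
    rw [Function.update_of_ne (by omega), Function.update_self, Function.update_self, hψ,
      mul_smul, smul_sub, Pi.smul_apply, Pi.smul_apply, Linear.comp_smul]
    abel

theorem exists_homotopy_pow_smul_id_zero_of_bounded [IsNoetherianRing R]
    (K : CochainComplex (ModuleCat R) ℤ) {N : ℕ} (hK : ∀ q : ℤ, N < |q| → IsZero (K.X q))
    [∀ q, Module.Finite R (K.X q)] [∀ q, Module.Projective R (K.X q)] {f : R}
    (hf : ∀ (i : ℤ) (x : K.homology i), ∃ n : ℕ, f ^ n • x = 0) :
    ∃ n₀ : ℕ, ∀ n : ℕ, n₀ ≤ n → Nonempty (Homotopy ((f ^ n : R) • 𝟙 K) 0) := by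
  have hpartial : ∀ a ≤ (N + 1 : ℤ), ∃ (n : ℕ) (h : ∀ p q : ℤ, K.X p ⟶ K.X q),
      IsNullHomotopyFrom K (f ^ n) h a := by
    refine Int.leInductionDown ⟨0, _, isNullHomotopyFrom_of_isZero (fun q hq => hK q ?_) _⟩ ?_
    · rw [lt_abs]; left; omega
    · rintro a - ⟨n, h, hh⟩
      obtain ⟨m, hm⟩ := K.exists_pow_smul_id_homology_eq_zero (a - 1) (hf (a - 1))
      obtain ⟨h', hh'⟩ := hh.extend hm
      exact ⟨m + n, h', by rwa [pow_add]⟩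
  obtain ⟨n₀, h, hh⟩ := hpartial (-N) (by omega)
  have H := hh.homotopy fun q hq => hK q (by rw [lt_abs]; right; omega)
  refine ⟨n₀, fun n hn => ⟨?_⟩⟩
  have := H.smul (f ^ (n - n₀))
  rwa [smul_smul, ← pow_add, Nat.sub_add_cancel hn, smul_zero] at this

namespace mappingCone

theorem isZero_X_of_lt_abs {V : Type*} [Category V] [Preadditive V] {F G : CochainComplex V ℤ}
    (φ : F ⟶ G) [HomologicalComplex.HasHomotopyCofiber φ] {NF NG : ℕ}
    (hF : ∀ q : ℤ, NF < |q| → IsZero (F.X q)) (hG : ∀ q : ℤ, NG < |q| → IsZero (G.X q))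
    (q : ℤ) (hq : (max NF NG + 1 : ℕ) < |q|) :
    IsZero ((mappingCone φ).X q) := by
  rw [lt_abs] at hq
  push_cast at hq
  refine (isZero_X_iff φ q).mpr ⟨hF _ ?_, hG _ ?_⟩ <;> rw [lt_abs] <;> omega

noncomputable def XLinearEquiv {F G : CochainComplex (ModuleCat R) ℤ} (φ : F ⟶ G) (q : ℤ) :
    (mappingCone φ).X q ≃ₗ[R] F.X (q + 1) × G.X q :=
  (HomologicalComplex.homotopyCofiber.XIsoBiprod φ q (q + 1) rfl ≪≫
    ModuleCat.biprodIsoProd _ _).toLinearEquiv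

end mappingCone

end CochainComplex

/-- Let `R` be a Noetherian (commutative, so that `f` is automatically
central) ring, `b : C ⟶ C'` a morphism of perfect complexes of `R`-modules, and `f ∈ R` such
that `R[1/f] ⊗^L Cone(b) = 0` (i.e. every homology class of the mapping cone of `b` is killed
by a power of `f`).  Then for `n` sufficiently large, multiplication by `f^n` on `Cone(b)` is
zero in the derived category (i.e. null-homotopic). -/
theorem stmt2 (R : Type) [CommRing R] [IsNoetherianRing R]
    (C C' : CochainComplex (ModuleCat R) ℤ)
    (hCbdd : ∃ N : ℕ, ∀ q : ℤ, N < |q| → Limits.IsZero (C.X q))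
    (hC'bdd : ∃ N : ℕ, ∀ q : ℤ, N < |q| → Limits.IsZero (C'.X q))
    (hCfin : ∀ q : ℤ, Module.Finite R (C.X q)) (hC'fin : ∀ q : ℤ, Module.Finite R (C'.X q))
    (hCproj : ∀ q : ℤ, Module.Projective R (C.X q))
    (hC'proj : ∀ q : ℤ, Module.Projective R (C'.X q))
    (b : C ⟶ C') (f : R)
    (hloc : ∀ (i : ℤ) (x : (CochainComplex.mappingCone b).homology i), ∃ n : ℕ, f ^ n • x = 0) :
    ∃ n₀ : ℕ, ∀ n : ℕ, n₀ ≤ n →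
      Nonempty (Homotopy ((f ^ n : R) • 𝟙 (CochainComplex.mappingCone b)) 0) := by
  obtain ⟨N, hN⟩ := hCbdd
  obtain ⟨N', hN'⟩ := hC'bdd
  have (q : ℤ) : Module.Finite R ((CochainComplex.mappingCone b).X q) :=
    have := hCfin (q + 1); have := hC'fin q
    Module.Finite.equiv (CochainComplex.mappingCone.XLinearEquiv b q).symm
  have (q : ℤ) : Module.Projective R ((CochainComplex.mappingCone b).X q) :=
    have := hCproj (q + 1); have := hC'proj q
    Module.Projective.of_equiv (CochainComplex.mappingCone.XLinearEquiv b q).symm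
  exact CochainComplex.exists_homotopy_pow_smul_id_zero_of_bounded _
    (CochainComplex.mappingCone.isZero_X_of_lt_abs b hN hN') hloc
end
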